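/- arXiv:1306.0337 — 4 statements merged into one kernel-verified Lean document; each statement's English description precedes it below -/
import Mathlib

section
/- Let (V, ω) be a symplectic vector space and equip V × V with the 2-polysymplectic structure (pr₁*ω, pr₂*ω). Then for the diagonal subspace U = {(v,v) | v ∈ V}, one has (U^{⊥,2})^{⊥,2} = V × V ≠ U when dim V > 0. -/
/-- The polysymplectic orthogonal of a subset of `V × V` with respect to the
2-polysymplectic structure `(pr₁*ω, pr₂*ω)`. -/
def polyPerp2 {V : Type*} [AddCommGroup V] [Module ℝ V]
    (ω : V →ₗ[ℝ] V →ₗ[ℝ] ℝ) (S : Set (V × V)) : Set (V × V) :=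
  {x : V × V | ∀ u ∈ S, ω x.1 u.1 = 0 ∧ ω x.2 u.2 = 0}

/-- For a symplectic vector space `(V, ω)` with `dim V > 0` and the diagonal
subspace `U = {(v,v)} ⊆ V × V`, the double polysymplectic orthogonal is all of `V × V`,
hence `(U^{⊥,2})^{⊥,2} ≠ U`: the double polysymplectic orthogonal does not recover `U`. -/
theorem diagonal_double_polyPerp
    {V : Type*} [AddCommGroup V] [Module ℝ V] [FiniteDimensional ℝ V]
    (ω : V →ₗ[ℝ] V →ₗ[ℝ] ℝ)
    (hskew : ∀ v w, ω v w = - ω w v)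
    (hnd : ∀ v : V, (∀ w, ω v w = 0) → v = 0)
    (hdim : ∃ v : V, v ≠ 0) :
    polyPerp2 ω (polyPerp2 ω {p : V × V | p.1 = p.2}) = Set.univ ∧
      polyPerp2 ω (polyPerp2 ω {p : V × V | p.1 = p.2}) ≠ {p : V × V | p.1 = p.2} := by
  have hfirst : polyPerp2 ω {p : V × V | p.1 = p.2} = {(0 : V × V)} := by
    ext x
    constructor
    · intro hx
      have h1 : x.1 = 0 := hnd _ fun w => (hx (w, w) rfl).1
      have h2 : x.2 = 0 := hnd _ fun w => (hx (w, w) rfl).2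
      simp [Prod.ext_iff, h1, h2]
    · rintro rfl
      intro u _
      simp
  have huniv : polyPerp2 ω (polyPerp2 ω {p : V × V | p.1 = p.2}) = Set.univ := by
    rw [hfirst]
    ext x
    simp [polyPerp2]
  refine ⟨huniv, ?_⟩
  rw [huniv]
  intro h
  obtain ⟨v, hv⟩ := hdim
  have : ((v, 0) : V × V) ∈ {p : V × V | p.1 = p.2} := h ▸ Set.mem_univ _
  exact hv this
end

section
/- Let G act on a polysymplectic manifold (M, ω¹,…,ωᵏ) by a polysymplectic action with Coad^k-equivariant momentum map J = (J¹,…,Jᵏ): M → (g*)^k, let μ be a regular value of J, and let m ∈ J⁻¹(μ). Then T_m(J⁻¹(μ)) equals the polysymplectic orthogonal T_m^{⊥,k}(G·m) of the tangent space to the G-orbit, i.e. X ∈ T_m(J⁻¹(μ)) iff ω^A(m)(X, ξ_M(m)) = 0 for all ξ ∈ g and all A = 1,…,k. -/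
section MomentumMap

variable {R 𝔤 T : Type*} [CommRing R] [AddCommGroup 𝔤] [Module R 𝔤] [AddCommGroup T]
  [Module R T]

theorem forall_skew_apply_generator_eq_zero_iff {ω : T →ₗ[R] T →ₗ[R] R}
    (hskew : ∀ v w : T, ω v w = - ω w v) {σ : 𝔤 →ₗ[R] T} {J' : T →ₗ[R] Module.Dual R 𝔤}
    (hmom : ∀ (ξ : 𝔤) (X : T), ω (σ ξ) X = J' X ξ) (X : T) :
    (∀ ξ : 𝔤, ω X (σ ξ) = 0) ↔ J' X = 0 := by
  have hneg (ξ : 𝔤) : ω X (σ ξ) = - J' X ξ := by rw [hskew, hmom]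
  simp only [hneg, neg_eq_zero]
  exact ⟨fun h => LinearMap.ext h, fun h ξ => by rw [h, LinearMap.zero_apply]⟩

end MomentumMap

theorem tangent_level_set_eq_polysymplectic_orthogonal_of_orbit_general
    {𝔤 T : Type*} [AddCommGroup 𝔤] [Module ℝ 𝔤]
    [AddCommGroup T] [Module ℝ T]
    {k : ℕ} (ω : Fin k → T →ₗ[ℝ] T →ₗ[ℝ] ℝ)
    (hskew : ∀ A (v w : T), ω A v w = - ω A w v)
    (σ : 𝔤 →ₗ[ℝ] T)
    (J' : Fin k → T →ₗ[ℝ] Module.Dual ℝ 𝔤)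
    (hmom : ∀ A (ξ : 𝔤) (X : T), ω A (σ ξ) X = J' A X ξ) :
    {X : T | ∀ A, J' A X = 0} =
      {X : T | ∀ A (ξ : 𝔤), ω A X (σ ξ) = 0} := by
  ext X
  exact forall_congr' fun A =>
    (forall_skew_apply_generator_eq_zero_iff (hskew A) (hmom A) X).symm

/-- linearized at `m ∈ J⁻¹(μ)`: on the tangent space `T_mM` (a finite-
dimensional vector space `T`), with `ω A` the polysymplectic forms at `m`,
`σ : 𝔤 → T` the infinitesimal generator map (so `T_m(G·m) = range σ`), and
`J' A = T_m J^A : T → 𝔤*` the differentials of the momentum map components, the momentum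
map condition `ω^A(ξ_M(m), X) = dĴ^A_ξ(X)` implies that
`T_m(J⁻¹(μ)) = ⋂_A ker J'^A` equals the polysymplectic orthogonal `T_m^{⊥,k}(G·m)`. -/
theorem tangent_level_set_eq_polysymplectic_orthogonal_of_orbit
    {𝔤 T : Type*} [AddCommGroup 𝔤] [Module ℝ 𝔤] [FiniteDimensional ℝ 𝔤]
    [AddCommGroup T] [Module ℝ T] [FiniteDimensional ℝ T]
    {k : ℕ} (ω : Fin k → T →ₗ[ℝ] T →ₗ[ℝ] ℝ)
    (hskew : ∀ A (v w : T), ω A v w = - ω A w v)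
    (σ : 𝔤 →ₗ[ℝ] T)
    (J' : Fin k → T →ₗ[ℝ] Module.Dual ℝ 𝔤)
    (hmom : ∀ A (ξ : 𝔤) (X : T), ω A (σ ξ) X = J' A X ξ) :
    {X : T | ∀ A, J' A X = 0} =
      {X : T | ∀ A (ξ : 𝔤), ω A X (σ ξ) = 0} :=
  tangent_level_set_eq_polysymplectic_orthogonal_of_orbit_general ω hskew σ J' hmom
end

section
/- Let (M, ω¹,…,ωᵏ; Φ, J) be a polysymplectic Hamiltonian G-space, μ a regular value of J, i: J⁻¹(μ) ↪ M the inclusion. Then for every x ∈ J⁻¹(μ), T_x(G_μ·x) ⊆ ⋂_{A=1}^k ker (i*ω^A)(x); that is, for every ξ in the isotropy algebra g_μ and every X_x ∈ T_x(J⁻¹(μ)), ω^A(x)(ξ_M(x), X_x) = 0 for all A. -/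
theorem isotropy_orbit_in_ker_restricted_forms_general
    {𝔤 T : Type*} [AddCommGroup 𝔤] [Module ℝ 𝔤]
    [AddCommGroup T] [Module ℝ T]
    {k : ℕ} (ω : Fin k → T →ₗ[ℝ] T →ₗ[ℝ] ℝ)
    (σ : 𝔤 →ₗ[ℝ] T)
    (J' : Fin k → T →ₗ[ℝ] Module.Dual ℝ 𝔤)
    (hmom : ∀ A (ξ : 𝔤) (X : T), ω A (σ ξ) X = J' A X ξ)
    (τ : 𝔤 →ₗ[ℝ] (Fin k → Module.Dual ℝ 𝔤)) :
    ∀ ξ ∈ LinearMap.ker τ, ∀ X : T, (∀ A, J' A X = 0) → ∀ A, ω A (σ ξ) X = 0 := by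
  intro ξ _ X hX A
  rw [hmom, hX, LinearMap.zero_apply]

/-- linearized at `x ∈ J⁻¹(μ)`: on `T = T_xM`, with `ω A` the
polysymplectic forms at `x`, `σ : 𝔤 → T` the infinitesimal generator map,
`J' A = T_xJ^A`, `τ : 𝔤 → (𝔤*)^k` the infinitesimal `k`-coadjoint action at `μ`
(so `𝔤_μ = ker τ`), the momentum map condition gives:
for every `ξ ∈ 𝔤_μ` and every `X ∈ T_x(J⁻¹(μ)) = ⋂_A ker J'^A`,
`ω^A(ξ_M(x), X) = 0` for all `A`; i.e. `T_x(G_μ·x) ⊆ ⋂_A ker (i*ω^A)(x)`. -/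
theorem isotropy_orbit_in_ker_restricted_forms
    {𝔤 T : Type*} [AddCommGroup 𝔤] [Module ℝ 𝔤] [FiniteDimensional ℝ 𝔤]
    [AddCommGroup T] [Module ℝ T] [FiniteDimensional ℝ T]
    {k : ℕ} (ω : Fin k → T →ₗ[ℝ] T →ₗ[ℝ] ℝ)
    (hskew : ∀ A (v w : T), ω A v w = - ω A w v)
    (σ : 𝔤 →ₗ[ℝ] T)
    (J' : Fin k → T →ₗ[ℝ] Module.Dual ℝ 𝔤)
    (hmom : ∀ A (ξ : 𝔤) (X : T), ω A (σ ξ) X = J' A X ξ)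
    (τ : 𝔤 →ₗ[ℝ] (Fin k → Module.Dual ℝ 𝔤)) :
    ∀ ξ ∈ LinearMap.ker τ, ∀ X : T, (∀ A, J' A X = 0) → ∀ A, ω A (σ ξ) X = 0 :=
  isotropy_orbit_in_ker_restricted_forms_general ω σ J' hmom τ
end

section
/- Let G be a Lie group with Lie algebra g, μ = (μ₁,…,μ_k) ∈ (g*)^k, and let O_μ be the k-coadjoint orbit of μ under Coad^k. For each A, let pr_A: O_μ → O_{μ_A} denote the projection onto the A-th coadjoint orbit, and ω_{μ_A} the Kirillov-Kostant-Souriau symplectic form on O_{μ_A} given by ω_{μ_A}(ν)(ξ_{g*}(ν), η_{g*}(ν)) = -ν[ξ,η]. Then the forms ω_μ^A = pr_A* ω_{μ_A} satisfy: ω_μ^A(ν₁,…,ν_k)(ξ_{(g*)^k}, η_{(g*)^k}) = -ν_A[ξ,η], and (ω_μ¹,…,ω_μᵏ) is a k-polysymplectic structure on O_μ, i.e. ⋂_{A=1}^k ker ω_μ^A = 0. -/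
/-!
A vector `v = ξ_{(𝔤*)^k}(ν)` tangent to the orbit is the family of functionals `η ↦ -ν_A⁅ξ, η⁆`,
so the KKS form is simply `ω^A(v, η_{(𝔤*)^k}(ν)) = v_A(η)`; skew-symmetry of the bracket makes
this well defined on the orbit's tangent space, and a tangent vector killed by every `ω^A` has all
components `v_A = 0`. Linearity in the first slot comes from a linear section of the
infinitesimal action over its range.
-/

section LinearRangeSplitting

variable {K V W : Type*} [Field K] [AddCommGroup V] [Module K V] [AddCommGroup W] [Module K W]

theorem LinearMap.exists_rightInverse_rangeRestrict (f : V →ₗ[K] W) :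
    ∃ s : LinearMap.range f →ₗ[K] V, f.rangeRestrict ∘ₗ s = LinearMap.id :=
  f.rangeRestrict.exists_rightInverse_of_surjective f.range_rangeRestrict

/-- The linear analogue of `Set.rangeSplitting`. -/
noncomputable def linearRangeSplitting (f : V →ₗ[K] W) : LinearMap.range f →ₗ[K] V :=
  f.exists_rightInverse_rangeRestrict.choose

theorem apply_linearRangeSplitting (f : V →ₗ[K] W) (w : LinearMap.range f) :
    f (linearRangeSplitting f w) = w :=
  congrArg Subtype.val <| LinearMap.congr_fun f.exists_rightInverse_rangeRestrict.choose_spec w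

end LinearRangeSplitting

section SkewGenerator

variable {K V ι : Type*} [Field K] [AddCommGroup V] [Module K V]
  (gen : V →ₗ[K] ι → Module.Dual K V)

/-- `kksForm gen A v w = -w_A(σ v)` for the section `σ = linearRangeSplitting gen`. -/
noncomputable def kksForm (A : ι) :
    LinearMap.range gen →ₗ[K] LinearMap.range gen →ₗ[K] K :=
  (-((linearRangeSplitting gen).dualMap ∘ₗ LinearMap.proj A ∘ₗ (LinearMap.range gen).subtype)).flip

variable {gen}

theorem kksForm_apply_gen (hskew : ∀ a b A, gen a A b = -gen b A a)
    (A : ι) (v : LinearMap.range gen) (η : V) :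
    kksForm gen A v ⟨gen η, LinearMap.mem_range_self gen η⟩ = (v : ι → Module.Dual K V) A η := by
  simp only [kksForm, LinearMap.flip_apply, LinearMap.neg_apply, LinearMap.comp_apply,
    Submodule.subtype_apply, LinearMap.proj_apply, LinearMap.dualMap_apply]
  rw [hskew, neg_neg, apply_linearRangeSplitting]

theorem kksForm_nondegenerate (hskew : ∀ a b A, gen a A b = -gen b A a)
    (v : LinearMap.range gen) (hv : ∀ A w, kksForm gen A v w = 0) : v = 0 := by
  ext A η
  simpa [kksForm_apply_gen hskew] using hv A ⟨gen η, LinearMap.mem_range_self gen η⟩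

end SkewGenerator

theorem kks_polysymplectic_on_k_coadjoint_orbit_general
    {𝔤 : Type*} [LieRing 𝔤] [LieAlgebra ℝ 𝔤]
    {k : ℕ} (ν : Fin k → Module.Dual ℝ 𝔤)
    (gen : 𝔤 →ₗ[ℝ] (Fin k → Module.Dual ℝ 𝔤))
    (hgen : ∀ (ξ η : 𝔤) (A : Fin k), gen ξ A η = -(ν A ⁅ξ, η⁆)) :
    ∃ Ω : Fin k →
        ↥(LinearMap.range gen) →ₗ[ℝ] ↥(LinearMap.range gen) →ₗ[ℝ] ℝ,
      (∀ (A : Fin k) (ξ η : 𝔤),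
        Ω A ⟨gen ξ, LinearMap.mem_range_self gen ξ⟩
            ⟨gen η, LinearMap.mem_range_self gen η⟩ = -(ν A ⁅ξ, η⁆)) ∧
      (∀ v : ↥(LinearMap.range gen), (∀ A w, Ω A v w = 0) → v = 0) := by
  have hskew : ∀ a b A, gen a A b = -gen b A a := fun a b A => by
    rw [hgen, hgen, ← lie_skew a b, map_neg, neg_neg]
  exact ⟨kksForm gen, fun A ξ η => by rw [kksForm_apply_gen hskew, hgen],
    kksForm_nondegenerate hskew⟩

/-- at a point `ν = (ν₁,…,ν_k)` of the `k`-coadjoint orbit: let `gen` be the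
infinitesimal generator map of the `k`-coadjoint action, `gen ξ = ξ_{(𝔤*)^k}(ν)`, i.e.
`gen ξ A η = -ν_A⁅ξ,η⁆` (so the tangent space to the orbit at `ν` is `range gen`). Then
there exist bilinear forms `Ω^A` on the tangent space — the pullbacks `pr_A* ω_{ν_A}` of
the KKS forms — satisfying `Ω^A(ξ_{(𝔤*)^k}(ν), η_{(𝔤*)^k}(ν)) = -ν_A⁅ξ,η⁆`, and they are
polysymplectic: `⋂_{A} ker Ω^A = 0`. -/
theorem kks_polysymplectic_on_k_coadjoint_orbit
    {𝔤 : Type*} [LieRing 𝔤] [LieAlgebra ℝ 𝔤] [FiniteDimensional ℝ 𝔤]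
    {k : ℕ} (ν : Fin k → Module.Dual ℝ 𝔤)
    (gen : 𝔤 →ₗ[ℝ] (Fin k → Module.Dual ℝ 𝔤))
    (hgen : ∀ (ξ η : 𝔤) (A : Fin k), gen ξ A η = -(ν A ⁅ξ, η⁆)) :
    ∃ Ω : Fin k →
        ↥(LinearMap.range gen) →ₗ[ℝ] ↥(LinearMap.range gen) →ₗ[ℝ] ℝ,
      (∀ (A : Fin k) (ξ η : 𝔤),
        Ω A ⟨gen ξ, LinearMap.mem_range_self gen ξ⟩
            ⟨gen η, LinearMap.mem_range_self gen η⟩ = -(ν A ⁅ξ, η⁆)) ∧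
      (∀ v : ↥(LinearMap.range gen), (∀ A w, Ω A v w = 0) → v = 0) :=
  kks_polysymplectic_on_k_coadjoint_orbit_general ν gen hgen
end
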